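/- arXiv:2402.01265 — 4 statements merged into one kernel-verified Lean document; each statement's English description precedes it below -/
import Mathlib

section
/- Let R be a finite nonempty index set of subpaths, where each subpath r ∈ R consists of n_r ≥ 1 segments with nonnegative travel times t^r : Fin n_r → ℝ and a deadline T^r ∈ ℝ satisfying Σ_i t^r_i < T^r. Then there exists a real number ρ > 0 such that for every r ∈ R, Σ_i ⌈t^r_i/ρ⌉·ρ ≤ T^r. -/
open Filter Topology

/-! Rounding each of the `k` terms up to a multiple of `ρ` adds less than `ρ` to each, so the
rounded sum is at most `∑ x + k ρ`, which tends to `∑ x < T` as `ρ → 0⁺`. Finitely many such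
eventual bounds hold simultaneously for some small `ρ > 0`. -/

theorem Int.ceil_div_mul_lt_add {x ρ : ℝ} (hρ : 0 < ρ) : (⌈x / ρ⌉ : ℝ) * ρ < x + ρ := by
  calc (⌈x / ρ⌉ : ℝ) * ρ < (x / ρ + 1) * ρ := by gcongr; exact Int.ceil_lt_add_one _
    _ = x + ρ := by field_simp

theorem sum_ceil_div_mul_le {ι : Type*} [Fintype ι] (x : ι → ℝ) {ρ : ℝ} (hρ : 0 < ρ) :
    ∑ i, (⌈x i / ρ⌉ : ℝ) * ρ ≤ ∑ i, x i + Fintype.card ι * ρ := by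
  calc ∑ i, (⌈x i / ρ⌉ : ℝ) * ρ ≤ ∑ i, (x i + ρ) :=
        Finset.sum_le_sum fun i _ => (Int.ceil_div_mul_lt_add hρ).le
    _ = ∑ i, x i + Fintype.card ι * ρ := by
        rw [Finset.sum_add_distrib, Finset.sum_const, Finset.card_univ, nsmul_eq_mul]

theorem eventually_sum_ceil_div_mul_le {ι : Type*} [Fintype ι] {x : ι → ℝ} {T : ℝ}
    (hT : ∑ i, x i < T) : ∀ᶠ ρ in 𝓝[>] 0, ∑ i, (⌈x i / ρ⌉ : ℝ) * ρ ≤ T := by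
  have hlim : Tendsto (fun ρ : ℝ => ∑ i, x i + Fintype.card ι * ρ) (𝓝 0) (𝓝 (∑ i, x i)) := by
    have hcont : Continuous fun ρ : ℝ => ∑ i, x i + Fintype.card ι * ρ := by fun_prop
    simpa using hcont.tendsto 0
  filter_upwards [nhdsWithin_le_nhds (hlim.eventually_lt_const hT), self_mem_nhdsWithin]
    with ρ hρT hρ
  exact (sum_ceil_div_mul_le x hρ).trans hρT.le

theorem exists_time_discretization_general (R : Type*) [Fintype R]
    (n : R → ℕ)
    (t : (r : R) → Fin (n r) → ℝ)
    (T : R → ℝ) (hT : ∀ r, ∑ i, t r i < T r) :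
    ∃ ρ : ℝ, 0 < ρ ∧ ∀ r, ∑ i, (⌈t r i / ρ⌉ : ℝ) * ρ ≤ T r := by
  have hall : ∀ᶠ ρ in 𝓝[>] 0, ∀ r, ∑ i, (⌈t r i / ρ⌉ : ℝ) * ρ ≤ T r :=
    eventually_all.2 fun r => eventually_sum_ceil_div_mul_le (hT r)
  obtain ⟨ρ, hρ, hρT⟩ := (eventually_mem_nhdsWithin.and hall).exists
  exact ⟨ρ, hρ, hρT⟩

/-- Discretization lemma: if every subpath's total travel time is strictly below its
deadline, there is a discrete time unit `ρ > 0` so that rounding every segment travel time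
up to the nearest multiple of `ρ` still meets every subpath's deadline. -/
theorem exists_time_discretization (R : Type*) [Fintype R] [Nonempty R]
    (n : R → ℕ) (hn : ∀ r, 1 ≤ n r)
    (t : (r : R) → Fin (n r) → ℝ) (ht : ∀ r i, 0 ≤ t r i)
    (T : R → ℝ) (hT : ∀ r, ∑ i, t r i < T r) :
    ∃ ρ : ℝ, 0 < ρ ∧ ∀ r, ∑ i, (⌈t r i / ρ⌉ : ℝ) * ρ ≤ T r :=
  exists_time_discretization_general R n t T hT
end

section
/- Let n be a natural number, φ : {0,1}^n → ℝ a function, and L ∈ ℝ a global lower bound with L ≤ φ(z) for all z ∈ {0,1}^n. Then for all x, x̂ ∈ {0,1}^n, φ(x) ≥ L + (φ(x̂) − L)·(1 − δ(x, x̂)). -/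
open scoped Classical

/-- The linear expression of the integer L-shaped cut of Laporte and Louveaux:
`δ(x, x̂) = ∑_{k : x̂ k = 1} (1 - x k) + ∑_{k : x̂ k = 0} x k`. -/
noncomputable def ilsDelta {n : ℕ} (x xh : Fin n → ℝ) : ℝ :=
  (∑ k ∈ Finset.univ.filter (fun k => xh k = 1), (1 - x k)) +
    ∑ k ∈ Finset.univ.filter (fun k => xh k = 0), x k

/-- Validity of the integer L-shaped optimality cut: if `L` is a global lower bound of the
recourse function `φ` on binary vectors, then every binary `x` satisfies the cut generated
at any binary `x̂`. -/
theorem ils_cut_valid (n : ℕ) (φ : (Fin n → ℝ) → ℝ) (L : ℝ)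
    (hL : ∀ z : Fin n → ℝ, (∀ k, z k = 0 ∨ z k = 1) → L ≤ φ z)
    (x xh : Fin n → ℝ)
    (hx : ∀ k, x k = 0 ∨ x k = 1) (hxh : ∀ k, xh k = 0 ∨ xh k = 1) :
    φ x ≥ L + (φ xh - L) * (1 - ilsDelta x xh) := by
  by_cases h : x = xh
  · subst h
    have hδ : ilsDelta x x = 0 := by
      unfold ilsDelta
      rw [Finset.sum_eq_zero, Finset.sum_eq_zero]
      · ring
      · intro k hk
        exact (Finset.mem_filter.mp hk).2
      · intro k hk
        have := (Finset.mem_filter.mp hk).2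
        linarith
    rw [hδ]; ring_nf; simp
  · -- x ≠ xh, so δ ≥ 1
    obtain ⟨k, hk⟩ : ∃ k, x k ≠ xh k := by
      by_contra hc
      push_neg at hc
      exact h (funext hc)
    have h1nonneg : ∀ j ∈ Finset.univ.filter (fun j => xh j = 1), (0:ℝ) ≤ 1 - x j := by
      intro j _
      rcases hx j with h0 | h1 <;> linarith
    have h2nonneg : ∀ j ∈ Finset.univ.filter (fun j => xh j = 0), (0:ℝ) ≤ x j := by
      intro j _
      rcases hx j with h0 | h1 <;> linarith
    have hδ : 1 ≤ ilsDelta x xh := by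
      unfold ilsDelta
      rcases hxh k with hk0 | hk1
      · have hxk : x k = 1 := by rcases hx k with h0 | h1; exacts [absurd (h0.trans hk0.symm) hk, h1]
        have hmem : k ∈ Finset.univ.filter (fun j => xh j = 0) := by simp [hk0]
        have := Finset.single_le_sum h2nonneg hmem
        have hA : 0 ≤ ∑ j ∈ Finset.univ.filter (fun j => xh j = 1), (1 - x j) :=
          Finset.sum_nonneg h1nonneg
        linarith [hxk ▸ this]
      · have hxk : x k = 0 := by rcases hx k with h0 | h1; exacts [h0, absurd (h1.trans hk1.symm) hk]
        have hmem : k ∈ Finset.univ.filter (fun j => xh j = 1) := by simp [hk1]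
        have := Finset.single_le_sum h1nonneg hmem
        have hB : 0 ≤ ∑ j ∈ Finset.univ.filter (fun j => xh j = 0), x j :=
          Finset.sum_nonneg h2nonneg
        have : (1:ℝ) ≤ ∑ j ∈ Finset.univ.filter (fun j => xh j = 1), (1 - x j) := by
          rw [hxk] at this; linarith
        linarith
    have hφxh : L ≤ φ xh := hL xh hxh
    have hφx : L ≤ φ x := hL x hx
    nlinarith [mul_nonneg (sub_nonneg.mpr hφxh) (by linarith : (0:ℝ) ≤ ilsDelta x xh - 1)]
end

section
/- Let n be a natural number, φ : {0,1}^n → ℝ a function, and L ∈ ℝ with L ≤ φ(z) for all z ∈ {0,1}^n. Then for every x ∈ {0,1}^n and every θ ∈ ℝ, the following are equivalent: (i) θ ≥ L + (φ(x̂) − L)·(1 − δ(x, x̂)) for every x̂ ∈ {0,1}^n; (ii) θ ≥ φ(x). -/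
open scoped Classical

/-- The full family of integer L-shaped cuts exactly represents the epigraph of the
recourse function `φ` on binary points. -/
theorem ils_cuts_exact (n : ℕ) (φ : (Fin n → ℝ) → ℝ) (L : ℝ)
    (hL : ∀ z : Fin n → ℝ, (∀ k, z k = 0 ∨ z k = 1) → L ≤ φ z)
    (x : Fin n → ℝ) (hx : ∀ k, x k = 0 ∨ x k = 1) (θ : ℝ) :
    (∀ xh : Fin n → ℝ, (∀ k, xh k = 0 ∨ xh k = 1) →
        θ ≥ L + (φ xh - L) * (1 - ilsDelta x xh)) ↔ θ ≥ φ x := by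
  have delta_eq : ∀ xh : Fin n → ℝ, (∀ k, xh k = 0 ∨ xh k = 1) →
      ilsDelta x xh = ∑ k, (if xh k = 1 then 1 - x k else x k) := by
    intro xh hxh
    unfold ilsDelta
    rw [Finset.sum_filter, Finset.sum_filter, ← Finset.sum_add_distrib]
    apply Finset.sum_congr rfl
    intro k _
    rcases hxh k with h | h <;> simp [h]
  have hδ0 : ilsDelta x x = 0 := by
    rw [delta_eq x hx]
    apply Finset.sum_eq_zero
    intro k _
    rcases hx k with h0 | h1
    · simp [h0]
    · simp [h1]
  constructor
  · intro hcut
    have h := hcut x hx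
    rw [hδ0] at h
    linarith
  · intro hθ xh hxh
    by_cases hxe : xh = x
    · rw [hxe, hδ0]
      linarith
    · -- some coordinate differs, so δ ≥ 1
      have hne : ∃ k, xh k ≠ x k := by
        by_contra h
        push_neg at h
        exact hxe (funext h)
      obtain ⟨k0, hk0⟩ := hne
      have hterm : (if xh k0 = 1 then 1 - x k0 else x k0) = 1 := by
        rcases hxh k0 with h0 | h1
        · rcases hx k0 with hx0 | hx1
          · exact absurd (h0.trans hx0.symm) hk0
          · simp [h0, hx1]
        · rcases hx k0 with hx0 | hx1
          · simp [h1, hx0]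
          · exact absurd (h1.trans hx1.symm) hk0
      have hδ1 : (1 : ℝ) ≤ ilsDelta x xh := by
        rw [delta_eq xh hxh]
        calc (1 : ℝ) = (if xh k0 = 1 then 1 - x k0 else x k0) := hterm.symm
          _ ≤ ∑ k, (if xh k = 1 then 1 - x k else x k) := by
              apply Finset.single_le_sum (f := fun k => if xh k = 1 then 1 - x k else x k)
              · intro k _
                rcases hxh k with h0 | h1
                · rcases hx k with hx0 | hx1
                  · simp [h0, hx0]
                  · simp [h0, hx1]
                · rcases hx k with hx0 | hx1
                  · simp [h1, hx0]
                  · simp [h1, hx1]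
              · exact Finset.mem_univ k0
      have hφL : 0 ≤ φ xh - L := by have := hL xh hxh; linarith
      have : (φ xh - L) * (1 - ilsDelta x xh) ≤ 0 :=
        mul_nonpos_of_nonneg_of_nonpos hφL (by linarith)
      have hLx := hL x hx
      linarith
end

section
/- Let n be a natural number, c, φ : {0,1}^n → ℝ functions, and L ∈ ℝ with L ≤ φ(z) for all z ∈ {0,1}^n. Then the infimum of c(x) + θ over all pairs (x, θ) with x ∈ {0,1}^n, θ ∈ ℝ, and θ ≥ L + (φ(x̂) − L)·(1 − δ(x, x̂)) for every x̂ ∈ {0,1}^n, equals the minimum over x ∈ {0,1}^n of c(x) + φ(x), and this infimum is attained (namely at (x*, φ(x*)) for any minimizer x* of c + φ). -/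
open scoped Classical

/-- A vector is binary when each coordinate is `0` or `1`. -/
def IsBinaryVec {n : ℕ} (x : Fin n → ℝ) : Prop := ∀ k, x k = 0 ∨ x k = 1

lemma ilsDelta_eq_sum {n : ℕ} (x xh : Fin n → ℝ) :
    ilsDelta x xh =
      ∑ k, ((if xh k = 1 then (1 - x k) else 0) + (if xh k = 0 then x k else 0)) := by
  rw [ilsDelta, Finset.sum_filter, Finset.sum_filter, ← Finset.sum_add_distrib]

lemma ilsDelta_self {n : ℕ} {x : Fin n → ℝ} (hx : IsBinaryVec x) : ilsDelta x x = 0 := by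
  rw [ilsDelta_eq_sum]
  apply Finset.sum_eq_zero
  intro k _
  rcases hx k with h | h <;> simp [h]

lemma ilsDelta_ge_one {n : ℕ} {x xh : Fin n → ℝ} (hx : IsBinaryVec x) (hxh : IsBinaryVec xh)
    (hne : x ≠ xh) : 1 ≤ ilsDelta x xh := by
  obtain ⟨k0, hk0⟩ := Function.ne_iff.mp hne
  rw [ilsDelta_eq_sum]
  have hterm : ∀ k ∈ Finset.univ,
      (0:ℝ) ≤ ((if xh k = 1 then (1 - x k) else 0) + (if xh k = 0 then x k else 0)) := by
    intro k _
    rcases hx k with h | h <;> rcases hxh k with h' | h' <;> simp [h, h']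
  have h1 : (1:ℝ) ≤ ((if xh k0 = 1 then (1 - x k0) else 0) + (if xh k0 = 0 then x k0 else 0)) := by
    rcases hx k0 with h | h <;> rcases hxh k0 with h' | h' <;>
      simp [h, h'] at hk0 ⊢
  calc (1:ℝ) ≤ _ := h1
    _ ≤ _ := Finset.single_le_sum hterm (Finset.mem_univ k0)

/-- The integer L-shaped master problem with all cuts has the same optimal value as the
true two-stage problem `min_{x ∈ {0,1}^n} c x + φ x`, and this value is attained, namely
at `(x*, φ x*)` for a minimizer `x*` of `c + φ` over binary points. -/
theorem ils_master_exact (n : ℕ) (c φ : (Fin n → ℝ) → ℝ) (L : ℝ)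
    (hL : ∀ z : Fin n → ℝ, IsBinaryVec z → L ≤ φ z) :
    ∃ xstar : Fin n → ℝ, IsBinaryVec xstar ∧
      (∀ x : Fin n → ℝ, IsBinaryVec x → c xstar + φ xstar ≤ c x + φ x) ∧
      IsLeast
        {v : ℝ | ∃ (x : Fin n → ℝ) (θ : ℝ), IsBinaryVec x ∧
          (∀ xh : Fin n → ℝ, IsBinaryVec xh →
            θ ≥ L + (φ xh - L) * (1 - ilsDelta x xh)) ∧ v = c x + θ}
        (c xstar + φ xstar) := by
  -- minimizer over the finite set of binary vectors, via Bool-valued functions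
  set emb : (Fin n → Bool) → (Fin n → ℝ) := fun b k => if b k then 1 else 0 with hemb
  obtain ⟨b, -, hb⟩ := Finset.exists_min_image (Finset.univ : Finset (Fin n → Bool))
    (fun b => c (emb b) + φ (emb b)) ⟨fun _ => false, Finset.mem_univ _⟩
  refine ⟨emb b, ?_, ?_, ?_, ?_⟩
  · intro k; by_cases h : b k <;> simp [emb, h]
  · -- minimality over binary vectors
    intro x hx
    have hx' : emb (fun k => decide (x k = 1)) = x := by
      funext k
      rcases hx k with h | h <;> simp [emb, h]
    have := hb (fun k => decide (x k = 1)) (Finset.mem_univ _)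
    rwa [hx'] at this
  · -- membership: (x*, φ x*) is feasible
    refine ⟨emb b, φ (emb b), ?_, ?_, rfl⟩
    · intro k; by_cases h : b k <;> simp [emb, h]
    · intro xh hxh
      have hbin : IsBinaryVec (emb b) := by
        intro k; by_cases h : b k <;> simp [emb, h]
      by_cases heq : emb b = xh
      · rw [← heq, ilsDelta_self hbin]; ring_nf; rfl
      · have hδ := ilsDelta_ge_one hbin hxh heq
        have hφ := hL xh hxh
        have hφ2 := hL (emb b) hbin
        nlinarith
  · -- lower bound
    rintro v ⟨x, θ, hx, hcuts, rfl⟩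
    have hcut := hcuts x hx
    rw [ilsDelta_self hx] at hcut
    have hθ : φ x ≤ θ := by nlinarith
    have hx' : emb (fun k => decide (x k = 1)) = x := by
      funext k
      rcases hx k with h | h <;> simp [emb, h]
    have hmin := hb (fun k => decide (x k = 1)) (Finset.mem_univ _)
    rw [hx'] at hmin
    linarith
end
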